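/- Consider the three-tier construction with parameter δ and Boolean vectors x, y, and suppose the instance is uniquely intersecting, i.e., exactly one pair (α, β) has x^α_β = y^α_β = 1. Let μ₁ = {(w_{i+n/2}, m_i) : 1 ≤ i ≤ n/2} ∪ {(w_i, m_{i+n/2}) : 1 ≤ i ≤ n/2}. Then the divorce distance to stability of μ₁ is at least (1 − δ)n; that is, d(μ₁, μ') ≥ (1 − δ)n for every perfect marriage μ' that is stable for these preference lists. -/
import Mathlib


/-- Stability of a perfect marriage in a marriage market with full preference lists.
Women and men are both indexed by `Fin n`; `μ i` is the man married to woman `i`.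
`wR i j` is woman `i`'s rank of man `j` (lower rank = more preferred) and `mR j i`
is man `j`'s rank of woman `i`.  The marriage is stable when it is a bijection and
there is no blocking pair: no woman `i` and man `μ i'` (married to woman `i'`) such
that woman `i` prefers `μ i'` over her spouse `μ i` and man `μ i'` prefers `i` over
his spouse `i'`. -/
def StableFull (n : ℕ) (wR mR : ℕ → ℕ → ℕ) (μ : Fin n → Fin n) : Prop :=
  Function.Bijective μ ∧
    ∀ i i' : Fin n,
      ¬(wR i.val (μ i').val < wR i.val (μ i).val ∧
        mR (μ i').val i.val < mR (μ i').val i'.val)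

/-- Women's ranks in the three-tier construction, 0-indexed, with `n = 2 * k` and
`h = δn/2`: women/men with index `< h` are high, those in `[h, k)` are mid, and
those in `[k, n)` are low.  A low woman ranks the men in index order.  A mid woman
ranks the low men first (in index order) and then `m_1, …, m_{n/2}` (in index
order).  A high woman `i` ranks first the high men `j` with `x i j = 1`, then the
low men, then the mid men, then the high men `j` with `x i j = 0`, each group
sorted by index.  (Lower rank = more preferred.) -/
def tierWRank (n k h : ℕ) (x : ℕ → ℕ → Bool) (i j : ℕ) : ℕ :=
  if k ≤ i then j
  else if h ≤ i then (if k ≤ j then j - k else j + k)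
  else (if j < h ∧ x i j = true then 0
        else if k ≤ j then 1
        else if h ≤ j then 2
        else 3) * n + j

/-- Men's ranks in the three-tier construction, symmetric to `tierWRank`: a high
man `j` ranks first the high women `i` with `y i j = 1`, then the low women, then
the mid women, then the remaining high women, each group sorted by index. -/
def tierMRank (n k h : ℕ) (y : ℕ → ℕ → Bool) (j i : ℕ) : ℕ :=
  if k ≤ j then i
  else if h ≤ j then (if k ≤ i then i - k else i + k)
  else (if i < h ∧ y i j = true then 0
        else if k ≤ i then 1
        else if h ≤ i then 2
        else 3) * n + i

/-- The perfect marriage `μ₁` (0-indexed, with `n = 2 * k`): woman `i` marries man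
`(i + k) mod n`, i.e. `w_i ↔ m_{i + n/2}` for `1 ≤ i ≤ n/2` and `w_{i + n/2} ↔ m_i`
for `1 ≤ i ≤ n/2` in the 1-indexed notation of the paper. -/
def muOne (n k : ℕ) : Fin n → Fin n :=
  fun i => ⟨(i.val + k) % n, Nat.mod_lt _ (Nat.lt_of_le_of_lt (Nat.zero_le _) i.isLt)⟩

/-- The divorce distance `d(μ, μ') = n - |μ ∩ μ'|` between two perfect marriages,
where `|μ ∩ μ'|` is the number of couples married in both `μ` and `μ'`. -/
def divorceDist (n : ℕ) (μ μ' : Fin n → Fin n) : ℕ :=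
  n - (Finset.univ.filter (fun i => μ i = μ' i)).card

/- ### Auxiliary rank-evaluation lemmas -/

lemma wR_low {n k h : ℕ} {x : ℕ → ℕ → Bool} {i j : ℕ} (hi : k ≤ i) :
    tierWRank n k h x i j = j := if_pos hi

lemma wR_mid_low {n k h : ℕ} {x : ℕ → ℕ → Bool} {i j : ℕ}
    (hi : i < k) (hi2 : h ≤ i) (hj : k ≤ j) :
    tierWRank n k h x i j = j - k := by
  unfold tierWRank
  rw [if_neg (by omega), if_pos hi2, if_pos hj]

lemma wR_high_x {n k h : ℕ} {x : ℕ → ℕ → Bool} {i j : ℕ}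
    (hi : i < h) (hhk : h ≤ k) (hj : j < h) (hx : x i j = true) :
    tierWRank n k h x i j = j := by
  unfold tierWRank
  rw [if_neg (by omega), if_neg (by omega), if_pos ⟨hj, hx⟩]
  omega

lemma wR_high_ge {n k h : ℕ} {x : ℕ → ℕ → Bool} {i j : ℕ}
    (hi : i < h) (hhk : h ≤ k) (hj : h ≤ j) :
    n ≤ tierWRank n k h x i j := by
  unfold tierWRank
  rw [if_neg (by omega), if_neg (by omega),
    if_neg (by rintro ⟨h1, -⟩; omega)]
  split_ifs <;> omega

lemma mR_low {n k h : ℕ} {y : ℕ → ℕ → Bool} {i j : ℕ} (hj : k ≤ j) :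
    tierMRank n k h y j i = i := if_pos hj

lemma mR_mid_low {n k h : ℕ} {y : ℕ → ℕ → Bool} {i j : ℕ}
    (hj : j < k) (hj2 : h ≤ j) (hi : k ≤ i) :
    tierMRank n k h y j i = i - k := by
  unfold tierMRank
  rw [if_neg (by omega), if_pos hj2, if_pos hi]

lemma mR_high_y {n k h : ℕ} {y : ℕ → ℕ → Bool} {i j : ℕ}
    (hj : j < h) (hhk : h ≤ k) (hi : i < h) (hy : y i j = true) :
    tierMRank n k h y j i = i := by
  unfold tierMRank
  rw [if_neg (by omega), if_neg (by omega), if_pos ⟨hi, hy⟩]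
  omega

lemma mR_high_ge {n k h : ℕ} {y : ℕ → ℕ → Bool} {i j : ℕ}
    (hj : j < h) (hhk : h ≤ k) (hi : h ≤ i) :
    n ≤ tierMRank n k h y j i := by
  unfold tierMRank
  rw [if_neg (by omega), if_neg (by omega),
    if_neg (by rintro ⟨h1, -⟩; omega)]
  split_ifs <;> omega

/- ### Auxiliary cardinality lemmas -/

lemma card_filter_val_lt (n m : ℕ) (hm : m ≤ n) :
    (Finset.univ.filter (fun w : Fin n => w.val < m)).card = m := by
  rw [← Finset.card_range m]
  apply Finset.card_bij (fun w _ => w.val)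
  · intro a ha
    simp only [Finset.mem_filter] at ha
    simpa using ha.2
  · intro a _ b _ hab
    exact Fin.ext hab
  · intro c hc
    simp only [Finset.mem_range] at hc
    exact ⟨⟨c, lt_of_lt_of_le hc hm⟩, by simp [hc], rfl⟩

lemma card_filter_val_Ico (n l u : ℕ) (hu : u ≤ n) :
    (Finset.univ.filter (fun w : Fin n => l ≤ w.val ∧ w.val < u)).card = u - l := by
  rw [← Nat.card_Ico l u]
  apply Finset.card_bij (fun w _ => w.val)
  · intro a ha
    simp only [Finset.mem_filter] at ha
    simp only [Finset.mem_Ico]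
    exact ha.2
  · intro a _ b _ hab
    exact Fin.ext hab
  · intro c hc
    simp only [Finset.mem_Ico] at hc
    exact ⟨⟨c, lt_of_lt_of_le hc.2 hu⟩, by simp [hc.1, hc.2], rfl⟩

lemma card_filter_comp {n : ℕ} {μ : Fin n → Fin n} (hbij : Function.Bijective μ)
    (P : Fin n → Prop) [DecidablePred P] :
    (Finset.univ.filter (fun w => P (μ w))).card = (Finset.univ.filter P).card := by
  apply Finset.card_bij (fun w _ => μ w)
  · intro a ha
    simp only [Finset.mem_filter] at ha ⊢
    exact ⟨Finset.mem_univ _, ha.2⟩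
  · intro a _ b _ hab
    exact hbij.1 hab
  · intro m hm
    simp only [Finset.mem_filter] at hm
    obtain ⟨w, rfl⟩ := hbij.2 m
    exact ⟨w, by simp [hm.2], rfl⟩

/- ### The two key structural lemmas -/

/-- No stable matching marries a mid woman `i` to the low man `i + k`. -/
lemma no_mid_fix {n k h a b : ℕ} {x y : ℕ → ℕ → Bool} (hn : n = 2 * k) (hhk : h ≤ k)
    (ha : a < h) (hb : b < h) (hx : x a b = true) (hy : y a b = true)
    {μ' : Fin n → Fin n} (hst : StableFull n (tierWRank n k h x) (tierMRank n k h y) μ')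
    (iw : Fin n) (hi1 : h ≤ iw.val) (hi2 : iw.val < k)
    (hfix : (μ' iw).val = iw.val + k) : False := by
  obtain ⟨hbij, hblock⟩ := hst
  set i := iw.val with hidef
  -- Step 1: every woman married to a low man in [k, i+k) has index < i
  have step1 : ∀ w : Fin n, k ≤ (μ' w).val → (μ' w).val < i + k → w.val < i := by
    intro w h1 h2
    have hwne : w ≠ iw := by
      intro e; rw [e, hfix] at h2; omega
    have hvne : w.val ≠ i := fun e => hwne (Fin.ext e)
    by_contra hcon
    push_neg at hcon
    apply hblock iw w
    constructor
    · rw [hfix, wR_mid_low hi2 hi1 h1, wR_mid_low hi2 hi1 (by omega)]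
      omega
    · rw [mR_low h1, mR_low h1]
      omega
  -- Step 2: counting
  set A := Finset.univ.filter (fun w : Fin n => w.val < i) with hA
  set B := Finset.univ.filter (fun w : Fin n => k ≤ (μ' w).val ∧ (μ' w).val < i + k) with hB
  have hBA : B ⊆ A := by
    intro w hw
    simp only [hA, hB, Finset.mem_filter, Finset.mem_univ, true_and] at hw ⊢
    exact step1 w hw.1 hw.2
  have hAcard : A.card = i := card_filter_val_lt n i (by omega)
  have hBcard : B.card = i := by
    rw [hB, card_filter_comp hbij (fun m : Fin n => k ≤ m.val ∧ m.val < i + k),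
      card_filter_val_Ico n k (i + k) (by omega)]
    omega
  have hAB : B = A := Finset.eq_of_subset_of_card_le hBA (by omega)
  -- Step 3: woman a is married to a low man
  have han : a < n := by omega
  have hbn : b < n := by omega
  set aw : Fin n := ⟨a, han⟩ with hawdef
  have haA : aw ∈ A := by
    simp only [hA, Finset.mem_filter, Finset.mem_univ, true_and]
    show a < i
    omega
  have haB : aw ∈ B := hAB ▸ haA
  have haB' : k ≤ (μ' aw).val ∧ (μ' aw).val < i + k := by
    simpa only [hB, Finset.mem_filter, Finset.mem_univ, true_and] using haB
  -- Step 4: the woman married to man b has index > i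
  obtain ⟨wb, hwb⟩ := hbij.2 ⟨b, hbn⟩
  have hwbv : (μ' wb).val = b := by rw [hwb]
  have hwbB : wb ∉ B := by
    simp only [hB, Finset.mem_filter, Finset.mem_univ, true_and, hwbv]
    rintro ⟨h1, -⟩; omega
  have hwbA : wb ∉ A := fun hmem => hwbB (hAB ▸ hmem)
  have hwbge : i ≤ wb.val := by
    by_contra hc
    exact hwbA (by simp only [hA, Finset.mem_filter, Finset.mem_univ, true_and]; omega)
  have hwbne : wb ≠ iw := by
    intro e; rw [e] at hwbv; omega
  have hwbgt : i < wb.val := lt_of_le_of_ne hwbge (fun e => hwbne (Fin.ext e.symm))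
  -- Step 5: (a, b) is a blocking pair
  apply hblock aw wb
  have hawv : aw.val = a := rfl
  rw [hawv, hwbv]
  constructor
  · have e1 : tierWRank n k h x a b = b := wR_high_x ha hhk hb hx
    have e2 : n ≤ tierWRank n k h x a (μ' aw).val := wR_high_ge ha hhk (by omega)
    omega
  · have e3 : tierMRank n k h y b a = a := mR_high_y hb hhk ha hy
    have e4 : n ≤ tierMRank n k h y b wb.val := mR_high_ge hb hhk (by omega)
    omega

/-- No stable matching marries a low woman `i ≥ k + h` to the mid man `i - k`. -/
lemma no_low_fix {n k h a b : ℕ} {x y : ℕ → ℕ → Bool} (hn : n = 2 * k) (hhk : h ≤ k)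
    (ha : a < h) (hb : b < h) (hx : x a b = true) (hy : y a b = true)
    {μ' : Fin n → Fin n} (hst : StableFull n (tierWRank n k h x) (tierMRank n k h y) μ')
    (iw : Fin n) (hi1 : k + h ≤ iw.val)
    (hfix : (μ' iw).val = iw.val - k) : False := by
  obtain ⟨hbij, hblock⟩ := hst
  set i := iw.val with hidef
  have hin : i < n := iw.isLt
  set j := i - k with hjdef
  have hjh : h ≤ j := by omega
  have hjk : j < k := by omega
  -- Step 1: every low woman in [k, i) is married to a man with index < j
  have step1 : ∀ w : Fin n, k ≤ w.val → w.val < i → (μ' w).val < j := by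
    intro w h1 h2
    have hwne : w ≠ iw := by
      intro e; rw [e] at h2; omega
    have hvne : (μ' w).val ≠ j := by
      intro e
      have : μ' w = μ' iw := Fin.ext (by rw [e, hfix])
      exact hwne (hbij.1 this)
    by_contra hcon
    push_neg at hcon
    apply hblock w iw
    constructor
    · rw [hfix, wR_low h1, wR_low h1]
      omega
    · rw [hfix, mR_mid_low hjk hjh h1, mR_mid_low hjk hjh (by omega)]
      omega
  -- Step 2: counting
  set C := Finset.univ.filter (fun w : Fin n => k ≤ w.val ∧ w.val < i) with hC
  set D := Finset.univ.filter (fun w : Fin n => (μ' w).val < j) with hD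
  have hCD : C ⊆ D := by
    intro w hw
    simp only [hC, hD, Finset.mem_filter, Finset.mem_univ, true_and] at hw ⊢
    exact step1 w hw.1 hw.2
  have hCcard : C.card = j := by
    rw [hC, card_filter_val_Ico n k i (by omega)]
  have hDcard : D.card = j := by
    rw [hD, card_filter_comp hbij (fun m : Fin n => m.val < j),
      card_filter_val_lt n j (by omega)]
  have hCDeq : C = D := Finset.eq_of_subset_of_card_le hCD (by omega)
  have han : a < n := by omega
  have hbn : b < n := by omega
  -- Step 3: the woman married to man b is a low woman
  obtain ⟨wb, hwb⟩ := hbij.2 ⟨b, hbn⟩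
  have hwbv : (μ' wb).val = b := by rw [hwb]
  have hwbD : wb ∈ D := by
    simp only [hD, Finset.mem_filter, Finset.mem_univ, true_and, hwbv]
    omega
  have hwbC : wb ∈ C := hCDeq ▸ hwbD
  have hwbC' : k ≤ wb.val ∧ wb.val < i := by
    simpa only [hC, Finset.mem_filter, Finset.mem_univ, true_and] using hwbC
  -- Step 4: woman a is married to a man with index > j
  set aw : Fin n := ⟨a, han⟩ with hawdef
  have hawC : aw ∉ C := by
    simp only [hC, Finset.mem_filter, Finset.mem_univ, true_and]
    rintro ⟨h1, -⟩
    have : k ≤ a := h1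
    omega
  have hawD : aw ∉ D := fun hmem => hawC (hCDeq ▸ hmem)
  have hage : j ≤ (μ' aw).val := by
    by_contra hc
    exact hawD (by simp only [hD, Finset.mem_filter, Finset.mem_univ, true_and]; omega)
  have hane : (μ' aw).val ≠ j := by
    intro e
    have : μ' aw = μ' iw := Fin.ext (by rw [e, hfix])
    have : aw = iw := hbij.1 this
    have : a = i := congrArg Fin.val this
    omega
  have hagt : j < (μ' aw).val := lt_of_le_of_ne hage (Ne.symm hane)
  -- Step 5: (a, b) is a blocking pair
  apply hblock aw wb
  have hawv : aw.val = a := rfl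
  rw [hawv, hwbv]
  constructor
  · have e1 : tierWRank n k h x a b = b := wR_high_x ha hhk hb hx
    have e2 : n ≤ tierWRank n k h x a (μ' aw).val := wR_high_ge ha hhk (by omega)
    omega
  · have e3 : tierMRank n k h y b a = a := mR_high_y hb hhk ha hy
    have e4 : n ≤ tierMRank n k h y b wb.val := mR_high_ge hb hhk (by omega)
    omega

/-- In the three-tier construction with a uniquely-intersecting instance (exactly
one pair of high indices `(a, b)` — `(α, β)` in the 1-indexed notation of the
paper — has `x^a_b = y^a_b = 1`), the divorce distance from `μ₁` to stability is
at least `(1 - δ) n`: every stable perfect marriage `μ'` for these preferences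
satisfies `d(μ₁, μ') ≥ (1 - δ) n`. -/
theorem muOne_far_from_stability (n k h a b : ℕ) (δ : ℝ) (x y : ℕ → ℕ → Bool)
    (hn : n = 2 * k) (hδ0 : 0 < δ) (hδ1 : δ ≤ 1)
    (hh : (h : ℝ) = δ * n / 2) (hhk : h ≤ k)
    (ha : a < h) (hb : b < h)
    (hxy : x a b = true ∧ y a b = true)
    (huniq : ∀ i j : ℕ, i < h → j < h → x i j = true → y i j = true → i = a ∧ j = b) :
    ∀ μ' : Fin n → Fin n,
      StableFull n (tierWRank n k h x) (tierMRank n k h y) μ' →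
      ((divorceDist n (muOne n k) μ' : ℝ)) ≥ (1 - δ) * n := by
  intro μ' hst
  obtain ⟨hx, hy⟩ := hxy
  set F := Finset.univ.filter (fun i : Fin n => muOne n k i = μ' i) with hF
  have hsub : F ⊆ Finset.univ.filter
      (fun i : Fin n => i.val < h ∨ (k ≤ i.val ∧ i.val < k + h)) := by
    intro w hw
    simp only [hF, Finset.mem_filter, Finset.mem_univ, true_and] at hw ⊢
    by_contra hcon
    push_neg at hcon
    obtain ⟨hc1, hc2⟩ := hcon
    rcases lt_or_ge w.val k with hwk | hwk
    · -- mid woman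
      have hmod : (w.val + k) % n = w.val + k := Nat.mod_eq_of_lt (by omega)
      have hfix : (μ' w).val = w.val + k := by
        rw [← hw]; simp only [muOne, hmod]
      exact no_mid_fix hn hhk ha hb hx hy ⟨hst.1, hst.2⟩ w (by omega) hwk hfix
    · -- low woman
      have hwkh := hc2 hwk
      have hmod : (w.val + k) % n = w.val - k := by
        have hlt : w.val < n := w.isLt
        have : w.val + k - n < n := by omega
        rw [Nat.mod_eq_sub_mod (by omega), Nat.mod_eq_of_lt this]
        omega
      have hfix : (μ' w).val = w.val - k := by
        rw [← hw]; simp only [muOne, hmod]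
      exact no_low_fix hn hhk ha hb hx hy ⟨hst.1, hst.2⟩ w (by omega) hfix
  have hcard2h : F.card ≤ 2 * h := by
    calc F.card ≤ (Finset.univ.filter
        (fun i : Fin n => i.val < h ∨ (k ≤ i.val ∧ i.val < k + h))).card :=
          Finset.card_le_card hsub
      _ ≤ (Finset.univ.filter (fun i : Fin n => i.val < h)).card +
          (Finset.univ.filter (fun i : Fin n => k ≤ i.val ∧ i.val < k + h)).card := by
            rw [Finset.filter_or]
            exact Finset.card_union_le _ _
      _ ≤ 2 * h := by
            rw [card_filter_val_lt n h (by omega), card_filter_val_Ico n k (k + h) (by omega)]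
            omega
  have hcardn : F.card ≤ n := by
    calc F.card ≤ Finset.univ.card := Finset.card_le_univ F
      _ = n := Finset.card_fin n
  have hdd : divorceDist n (muOne n k) μ' = n - F.card := rfl
  have hcast : ((divorceDist n (muOne n k) μ' : ℝ)) = (n : ℝ) - (F.card : ℝ) := by
    rw [hdd, Nat.cast_sub hcardn]
  rw [hcast]
  have hFr : (F.card : ℝ) ≤ 2 * (h : ℝ) := by exact_mod_cast hcard2h
  have hδn : δ * (n : ℝ) = 2 * (h : ℝ) := by linarith
  nlinarith [hFr, hδn]
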